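/- arXiv:1509.05734 — 3 statements merged into one kernel-verified Lean document; each statement's English description precedes it below -/
import Mathlib

section
/- Let n ≥ 2, T ∈ (0, ∞], f : [0,T) → ℝ continuously differentiable, and let x : [0,T) → ℝ be differentiable with x(0) ≤ -δ for some δ > 0 and x' ≤ -x² - 2x f'/(n-1) wherever x < 0. Define s(t) = ∫₀ᵗ e^{-2f(τ)/(n-1)} dτ. Then x(t) < 0 for all t ∈ [0,T), and for all t ∈ [0,T) with s(t) < (1/δ)e^{-2f(0)/(n-1)} one has x(t) ≤ -e^{-2f(t)/(n-1)} / ((1/δ)e^{-2f(0)/(n-1)} - s(t)). In particular, if s(t) → ∞ as t → T, then x(t) → -∞ as t approaches some t_p ≤ T with s(t_p) = (1/δ)e^{-2f(0)/(n-1)}. -/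
/-!
Put `g = exp (-2 f / (n - 1))` and `c = -2 f' / (n - 1)`, so that `g' = c g`, `s' = g`, and the
hypothesis reads `x' ≤ -x² + c x` where `x < 0`. On any interval where `x < 0` this gives
`(g / x)' = (c g x - g x') / x² ≥ g`, i.e. `g / x - s` is nondecreasing. At a first zero `t₀` of `x`
the multiplied-out inequality `g ≤ (g 0 / x 0 + s) x` would pass to the limit and give
`g t₀ ≤ 0`, so `x` stays negative; then `g / x ≥ g 0 / x 0 + s ≥ s - g 0 / δ` is the explicit bound,
and it forces `x → -∞` where the strictly increasing `s` reaches `g 0 / δ`.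
-/

open Real Filter Set Topology

section Riccati

variable {x g c s : ℝ → ℝ} {a b : ℝ}

theorem monotoneOn_div_sub_of_riccati
    (hg : ∀ u ∈ Icc a b, HasDerivAt g (c u * g u) u) (hg_pos : ∀ u ∈ Icc a b, 0 < g u)
    (hs : ∀ u ∈ Icc a b, HasDerivAt s (g u) u)
    (hx : ∀ u ∈ Icc a b, DifferentiableAt ℝ x u) (hx_neg : ∀ u ∈ Icc a b, x u < 0)
    (hx' : ∀ u ∈ Icc a b, deriv x u ≤ -x u ^ 2 + c u * x u) :
    MonotoneOn (fun t => g t / x t - s t) (Icc a b) := by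
  have hderiv : ∀ u ∈ Icc a b, HasDerivAt (fun t => g t / x t - s t)
      ((c u * g u * x u - g u * deriv x u) / x u ^ 2 - g u) u := fun u hu =>
    ((hg u hu).div (hx u hu).hasDerivAt (hx_neg u hu).ne).sub (hs u hu)
  refine monotoneOn_of_hasDerivWithinAt_nonneg (convex_Icc a b)
    (fun u hu => (hderiv u hu).continuousAt.continuousWithinAt)
    (fun u hu => (hderiv u (interior_subset hu)).hasDerivWithinAt) fun u hu => ?_
  replace hu := interior_subset hu
  rw [sub_nonneg, le_div_iff₀ (sq_pos_of_neg (hx_neg u hu))]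
  nlinarith [mul_le_mul_of_nonneg_left (hx' u hu) (hg_pos u hu).le]

theorem exists_first_nonneg (hab : a ≤ b) (hx : ContinuousOn x (Icc a b)) (ha : x a < 0)
    (hb : 0 ≤ x b) : ∃ t₀ ∈ Ioc a b, 0 ≤ x t₀ ∧ ∀ w ∈ Ico a t₀, x w < 0 := by
  set Z := Icc a b ∩ x ⁻¹' Ici 0
  have hZ : IsCompact Z := isCompact_Icc.of_isClosed_subset
    (hx.preimage_isClosed_of_isClosed isClosed_Icc isClosed_Ici) inter_subset_left
  obtain ⟨⟨ha₀, hb₀⟩, hx₀⟩ := hZ.sInf_mem ⟨b, ⟨hab, le_rfl⟩, hb⟩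
  refine ⟨sInf Z, ⟨ha₀.lt_of_ne ?_, hb₀⟩, hx₀, fun w hw => ?_⟩
  · rintro h
    exact ha.not_ge (h ▸ hx₀)
  · by_contra! hw'
    exact hw.2.not_ge (csInf_le hZ.bddBelow ⟨⟨hw.1, hw.2.le.trans hb₀⟩, hw'⟩)

theorem neg_of_riccati
    (hg : ∀ u ∈ Icc a b, HasDerivAt g (c u * g u) u) (hg_pos : ∀ u ∈ Icc a b, 0 < g u)
    (hs : ∀ u ∈ Icc a b, HasDerivAt s (g u) u) (hx : ∀ u ∈ Icc a b, DifferentiableAt ℝ x u)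
    (hx' : ∀ u ∈ Icc a b, x u < 0 → deriv x u ≤ -x u ^ 2 + c u * x u) (ha : x a < 0) :
    ∀ t ∈ Icc a b, x t < 0 := by
  intro t ht
  by_contra! hxt
  obtain ⟨t₀, ⟨hat₀, ht₀⟩, hx₀, hbefore⟩ := exists_first_nonneg ht.1
    (fun u hu => (hx u ⟨hu.1, hu.2.trans ht.2⟩).continuousAt.continuousWithinAt) ha hxt
  have hsub : Icc a t₀ ⊆ Icc a b := Icc_subset_Icc_right (ht₀.trans ht.2)
  have ht₀mem : t₀ ∈ Icc a b := hsub (right_mem_Icc.2 hat₀.le)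
  have hcomp : ∀ v ∈ Ico a t₀, g v ≤ (g a / x a - s a + s v) * x v := by
    intro v hv
    have hsub' : Icc a v ⊆ Icc a b := (Icc_subset_Icc_right hv.2.le).trans hsub
    have hneg : ∀ u ∈ Icc a v, x u < 0 := fun u hu => hbefore u ⟨hu.1, hu.2.trans_lt hv.2⟩
    have hmono := monotoneOn_div_sub_of_riccati (fun u hu => hg u (hsub' hu))
      (fun u hu => hg_pos u (hsub' hu)) (fun u hu => hs u (hsub' hu))
      (fun u hu => hx u (hsub' hu)) hneg (fun u hu => hx' u (hsub' hu) (hneg u hu))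
      (left_mem_Icc.2 hv.1) (right_mem_Icc.2 hv.1) hv.1
    exact (le_div_iff_of_neg (hneg v (right_mem_Icc.2 hv.1))).1 (by linarith)
  have hclosure : t₀ ∈ closure (Ico a t₀) := by
    rw [closure_Ico hat₀.ne]
    exact right_mem_Icc.2 hat₀.le
  have hx_cont := (hx t₀ ht₀mem).continuousAt.continuousWithinAt (s := Ico a t₀)
  have hxt₀ : x t₀ ≤ 0 := hx_cont.closure_le hclosure continuousWithinAt_const
    fun v hv => (hbefore v hv).le
  have hgt₀ : g t₀ ≤ (g a / x a - s a + s t₀) * x t₀ :=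
    (hg t₀ ht₀mem).continuousAt.continuousWithinAt.closure_le hclosure
      ((continuousAt_const.add (hs t₀ ht₀mem).continuousAt).mul
        (hx t₀ ht₀mem).continuousAt).continuousWithinAt hcomp
  rw [le_antisymm hxt₀ hx₀, mul_zero] at hgt₀
  exact (hg_pos t₀ ht₀mem).not_ge hgt₀

theorem le_neg_div_of_riccati {A : ℝ}
    (hg : ∀ u ∈ Icc a b, HasDerivAt g (c u * g u) u) (hg_pos : ∀ u ∈ Icc a b, 0 < g u)
    (hs : ∀ u ∈ Icc a b, HasDerivAt s (g u) u) (hx : ∀ u ∈ Icc a b, DifferentiableAt ℝ x u)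
    (hx' : ∀ u ∈ Icc a b, x u < 0 → deriv x u ≤ -x u ^ 2 + c u * x u) (ha : x a < 0)
    (hA : -A ≤ g a / x a - s a) :
    ∀ t ∈ Icc a b, s t < A → x t ≤ -g t / (A - s t) := by
  intro t ht hst
  have hneg := neg_of_riccati hg hg_pos hs hx hx' ha
  have hcomp := monotoneOn_div_sub_of_riccati hg hg_pos hs hx hneg
    (fun u hu => hx' u hu (hneg u hu)) (left_mem_Icc.2 (ht.1.trans ht.2)) ht ht.1
  have hgt : g t ≤ (s t - A) * x t :=
    (le_div_iff_of_neg (hneg t ht)).1 (by simp only at hcomp; linarith)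
  rw [neg_div, le_neg, div_le_iff₀ (sub_pos.2 hst)]
  linarith

end Riccati

theorem exists_tendsto_atBot_of_le_neg_div {x g s : ℝ → ℝ} {a b A : ℝ} (hg : Continuous g)
    (hg_pos : ∀ u, 0 < g u) (hs : StrictMono s) (hs_cont : Continuous s) (hab : a ≤ b)
    (hsa : s a < A) (hsb : A ≤ s b) (hx : ∀ t ∈ Icc a b, s t < A → x t ≤ -g t / (A - s t)) :
    ∃ t_p ∈ Ioc a b, s t_p = A ∧ Tendsto x (𝓝[<] t_p) atBot := by
  obtain ⟨t_p, ⟨hat_p', ht_pb⟩, hs_p⟩ :=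
    intermediate_value_Icc hab hs_cont.continuousOn ⟨hsa.le, hsb⟩
  have hat_p : a < t_p := hat_p'.lt_of_ne (by rintro rfl; exact hsa.ne hs_p)
  refine ⟨t_p, ⟨hat_p, ht_pb⟩, hs_p, ?_⟩
  have hgap : Tendsto (fun v => A - s v) (𝓝[<] t_p) (𝓝[>] 0) := by
    refine tendsto_nhdsWithin_iff.2 ⟨?_, eventually_nhdsWithin_of_forall fun v hv => ?_⟩
    · simpa [hs_p] using ((tendsto_const_nhds (x := A)).sub (hs_cont.tendsto t_p)).mono_left
        nhdsWithin_le_nhds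
    · exact sub_pos.2 (hs_p ▸ hs hv)
  have hbound : Tendsto (fun v => -g v / (A - s v)) (𝓝[<] t_p) atBot := by
    have h := ((hg.tendsto t_p).mono_left nhdsWithin_le_nhds).pos_mul_atTop (hg_pos t_p)
      hgap.inv_tendsto_nhdsGT_zero
    exact (tendsto_neg_atTop_atBot.comp h).congr fun v => by
      simp only [Function.comp_apply, Pi.inv_apply, neg_mul, div_eq_mul_inv]
  refine tendsto_atBot_mono' _ ?_ hbound
  filter_upwards [Ioo_mem_nhdsLT hat_p] with v hv
  exact hx v ⟨hv.1.le, hv.2.le.trans ht_pb⟩ (hs_p ▸ hs hv.2)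

theorem stmt5_general (n : ℕ) (T : EReal)
    (f x : ℝ → ℝ) (hf : ContDiff ℝ 1 f)
    (hxd : ∀ t : ℝ, 0 ≤ t → (t : EReal) < T → DifferentiableAt ℝ x t)
    (hx' : ∀ t : ℝ, 0 ≤ t → (t : EReal) < T → x t < 0 →
      deriv x t ≤ -(x t) ^ 2 - 2 * x t * deriv f t / (n - 1))
    (δ : ℝ) (hδ : 0 < δ) (h0 : x 0 ≤ -δ) :
    (∀ t : ℝ, 0 ≤ t → (t : EReal) < T → x t < 0) ∧
    (∀ t : ℝ, 0 ≤ t → (t : EReal) < T →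
      (∫ τ in (0:ℝ)..t, Real.exp (-2 * f τ / (n - 1)))
          < (1 / δ) * Real.exp (-2 * f 0 / (n - 1)) →
      x t ≤ -Real.exp (-2 * f t / (n - 1)) /
        ((1 / δ) * Real.exp (-2 * f 0 / (n - 1))
          - ∫ τ in (0:ℝ)..t, Real.exp (-2 * f τ / (n - 1)))) ∧
    ((∀ C : ℝ, ∃ t : ℝ, 0 ≤ t ∧ (t : EReal) < T ∧
        C ≤ ∫ τ in (0:ℝ)..t, Real.exp (-2 * f τ / (n - 1))) →
      ∃ t_p : ℝ, 0 < t_p ∧ (t_p : EReal) ≤ T ∧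
        (∫ τ in (0:ℝ)..t_p, Real.exp (-2 * f τ / (n - 1)))
          = (1 / δ) * Real.exp (-2 * f 0 / (n - 1)) ∧
        Tendsto x (nhdsWithin t_p (Set.Iio t_p)) atBot) := by
  set g : ℝ → ℝ := fun τ => exp (-2 * f τ / (n - 1))
  set s : ℝ → ℝ := fun t => ∫ τ in (0:ℝ)..t, g τ
  set c : ℝ → ℝ := fun u => -2 * deriv f u / (n - 1)
  have hg_pos (u : ℝ) : 0 < g u := exp_pos _
  have hg_cont : Continuous g := by fun_prop
  have hg (u : ℝ) : HasDerivAt g (c u * g u) u :=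
    (((hf.differentiable one_ne_zero u).hasDerivAt.const_mul (-2)).div_const
      ((n : ℝ) - 1)).exp.congr_deriv (mul_comm _ _)
  have hs (u : ℝ) : HasDerivAt s (g u) u := (hg_cont.integral_hasStrictDerivAt 0 u).hasDerivAt
  have hx0 : x 0 < 0 := by linarith
  have hs0 : s 0 = 0 := intervalIntegral.integral_same
  have hA : -((1 / δ) * g 0) ≤ g 0 / x 0 - s 0 := by
    rw [hs0, sub_zero, neg_le, ← div_neg, one_div_mul_eq_div]
    exact div_le_div_of_nonneg_left (hg_pos 0).le hδ (by linarith)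
  have hloc {t : ℝ} (htT : (t : EReal) < T) {u : ℝ} (hu : u ∈ Icc 0 t) : (u : EReal) < T :=
    (EReal.coe_le_coe_iff.2 hu.2).trans_lt htT
  have hdiff {t : ℝ} (htT : (t : EReal) < T) : ∀ u ∈ Icc 0 t, DifferentiableAt ℝ x u :=
    fun u hu => hxd u hu.1 (hloc htT hu)
  have hric {t : ℝ} (htT : (t : EReal) < T) :
      ∀ u ∈ Icc 0 t, x u < 0 → deriv x u ≤ -x u ^ 2 + c u * x u :=
    fun u hu hxu => (hx' u hu.1 (hloc htT hu) hxu).trans_eq (by ring)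
  have hbound {t : ℝ} (htT : (t : EReal) < T) :
      ∀ u ∈ Icc 0 t, s u < (1 / δ) * g 0 → x u ≤ -g u / ((1 / δ) * g 0 - s u) :=
    le_neg_div_of_riccati (fun u _ => hg u) (fun u _ => hg_pos u) (fun u _ => hs u)
      (hdiff htT) (hric htT) hx0 hA
  refine ⟨fun t ht htT => ?_, fun t ht htT => hbound htT t ⟨ht, le_rfl⟩, fun hs_unbdd => ?_⟩
  · exact neg_of_riccati (fun u _ => hg u) (fun u _ => hg_pos u) (fun u _ => hs u)
      (hdiff htT) (hric htT) hx0 t ⟨ht, le_rfl⟩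
  obtain ⟨t₁, ht₁, ht₁T, hA₁⟩ := hs_unbdd ((1 / δ) * g 0)
  obtain ⟨t_p, ⟨ht_p, ht_p₁⟩, hs_p, hlim⟩ := exists_tendsto_atBot_of_le_neg_div hg_cont hg_pos
    (strictMono_of_hasDerivAt_pos hs hg_pos)
    (continuous_iff_continuousAt.2 fun u => (hs u).continuousAt)
    ht₁ (by rw [hs0]; exact mul_pos (one_div_pos.2 hδ) (hg_pos 0)) hA₁ (hbound ht₁T)
  exact ⟨t_p, ht_p, (EReal.coe_le_coe_iff.2 ht_p₁).trans ht₁T.le, hs_p, hlim⟩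

/-- focusing lemma for `TCD(0,N)`, `N ≤ 1` or `N = ∞`:
if `x(0) ≤ -δ` and `x' ≤ -x² - 2xf'/(n-1)` wherever `x < 0` on `[0,T)`, then `x < 0`
throughout, the explicit upper bound holds while `s(t)` is below the critical value
`(1/δ)e^{-2f(0)/(n-1)}`, and if `s → ∞` then `x → -∞` at or before the parameter
`t_p` with `s(t_p) = (1/δ)e^{-2f(0)/(n-1)}`. -/
theorem stmt5 (n : ℕ) (hn : 2 ≤ n) (T : EReal) (hT : 0 < T)
    (f x : ℝ → ℝ) (hf : ContDiff ℝ 1 f)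
    (hxd : ∀ t : ℝ, 0 ≤ t → (t : EReal) < T → DifferentiableAt ℝ x t)
    (hx' : ∀ t : ℝ, 0 ≤ t → (t : EReal) < T → x t < 0 →
      deriv x t ≤ -(x t) ^ 2 - 2 * x t * deriv f t / (n - 1))
    (δ : ℝ) (hδ : 0 < δ) (h0 : x 0 ≤ -δ) :
    (∀ t : ℝ, 0 ≤ t → (t : EReal) < T → x t < 0) ∧
    (∀ t : ℝ, 0 ≤ t → (t : EReal) < T →
      (∫ τ in (0:ℝ)..t, Real.exp (-2 * f τ / (n - 1)))
          < (1 / δ) * Real.exp (-2 * f 0 / (n - 1)) →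
      x t ≤ -Real.exp (-2 * f t / (n - 1)) /
        ((1 / δ) * Real.exp (-2 * f 0 / (n - 1))
          - ∫ τ in (0:ℝ)..t, Real.exp (-2 * f τ / (n - 1)))) ∧
    ((∀ C : ℝ, ∃ t : ℝ, 0 ≤ t ∧ (t : EReal) < T ∧
        C ≤ ∫ τ in (0:ℝ)..t, Real.exp (-2 * f τ / (n - 1))) →
      ∃ t_p : ℝ, 0 < t_p ∧ (t_p : EReal) ≤ T ∧
        (∫ τ in (0:ℝ)..t_p, Real.exp (-2 * f τ / (n - 1)))
          = (1 / δ) * Real.exp (-2 * f 0 / (n - 1)) ∧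
        Tendsto x (nhdsWithin t_p (Set.Iio t_p)) atBot) :=
  stmt5_general n T f x hf hxd hx' δ hδ h0
end

section
/- Let N > 1 and let H : [0,T) → ℝ be differentiable with H(0) ≤ -(n-1)δ for some δ > 0 and n ≥ 2, and suppose H' ≤ -H²/(N-1) wherever H < 0. Then H(t) < 0 for all t, H(t) ≤ (N-1)/(t - (N-1)/((n-1)δ)) for t < (N-1)/((n-1)δ), and if T > (N-1)/((n-1)δ) then H(t) → -∞ as t approaches some t₀ ≤ (N-1)/((n-1)δ). -/
open Filter

/-- scalar content of Lemma 2.4, after Case: for `N > 1`, `n ≥ 2`,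
if `H(0) ≤ -(n-1)δ` and `H' ≤ -H²/(N-1)` wherever `H < 0`, then `H` stays negative,
obeys the explicit comparison bound, and blows up to `-∞` at or before
`(N-1)/((n-1)δ)` provided the domain extends that far. -/
theorem stmt6 (n N : ℝ) (hn : 2 ≤ n) (hN : 1 < N) (δ : ℝ) (hδ : 0 < δ)
    (T : EReal) (hT : 0 < T) (H : ℝ → ℝ)
    (hHd : ∀ t : ℝ, 0 ≤ t → (t : EReal) < T → DifferentiableAt ℝ H t)
    (hH' : ∀ t : ℝ, 0 ≤ t → (t : EReal) < T → H t < 0 →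
      deriv H t ≤ -(H t) ^ 2 / (N - 1))
    (h0 : H 0 ≤ -(n - 1) * δ) :
    (∀ t : ℝ, 0 ≤ t → (t : EReal) < T → H t < 0) ∧
    (∀ t : ℝ, 0 ≤ t → (t : EReal) < T → t < (N - 1) / ((n - 1) * δ) →
      H t ≤ (N - 1) / (t - (N - 1) / ((n - 1) * δ))) ∧
    ((((N - 1) / ((n - 1) * δ) : ℝ) : EReal) < T →
      ∃ t₀ : ℝ, 0 < t₀ ∧ t₀ ≤ (N - 1) / ((n - 1) * δ) ∧
        Tendsto H (nhdsWithin t₀ (Set.Iio t₀)) atBot) := by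
  have hc : 0 < (n - 1) * δ := mul_pos (by linarith) hδ
  have hN1 : (0 : ℝ) < N - 1 := by linarith
  set b : ℝ := (N - 1) / ((n - 1) * δ) with hb_def
  have hb : 0 < b := div_pos hN1 hc
  have hH0 : H 0 < 0 := lt_of_le_of_lt h0 (by nlinarith)
  -- Part 1: H stays negative
  have key_neg : ∀ t : ℝ, 0 ≤ t → (t : EReal) < T → H t < 0 := by
    intro t ht htT
    by_contra hpos
    push_neg at hpos
    have hcont : ContinuousOn H (Set.Icc 0 t) := by
      intro u hu
      exact ((hHd u hu.1 (lt_of_le_of_lt (EReal.coe_le_coe_iff.mpr hu.2) htT)).continuousAt).continuousWithinAt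
    obtain ⟨z, hz, hz0⟩ := intermediate_value_Icc ht hcont ⟨hH0.le, hpos⟩
    set S : Set ℝ := Set.Icc 0 t ∩ H ⁻¹' {0} with hS_def
    have hSne : S.Nonempty := ⟨z, hz, hz0⟩
    have hScl : IsClosed S := hcont.preimage_isClosed_of_isClosed isClosed_Icc isClosed_singleton
    have hSbdd : BddBelow S := ⟨0, fun u hu => hu.1.1⟩
    set s : ℝ := sInf S with hs_def
    have hsS : s ∈ S := hScl.csInf_mem hSne hSbdd
    have hs0 : H s = 0 := hsS.2
    have hsIcc : s ∈ Set.Icc 0 t := hsS.1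
    have hneg : ∀ u : ℝ, 0 ≤ u → u < s → H u < 0 := by
      intro u hu0 hus
      by_contra hq
      push_neg at hq
      have hut : u ≤ t := le_trans hus.le hsIcc.2
      obtain ⟨z', hz', hz'0⟩ := intermediate_value_Icc hu0
        (hcont.mono (Set.Icc_subset_Icc le_rfl hut)) ⟨hH0.le, hq⟩
      have : s ≤ z' := csInf_le hSbdd ⟨⟨hz'.1, le_trans hz'.2 hut⟩, hz'0⟩
      have : z' ≤ u := hz'.2
      linarith
    have hanti : AntitoneOn H (Set.Icc 0 s) := by
      apply antitoneOn_of_deriv_nonpos (convex_Icc 0 s)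
        (hcont.mono (Set.Icc_subset_Icc le_rfl hsIcc.2))
      · intro x hx
        rw [interior_Icc] at hx
        have hxT : (x : EReal) < T :=
          lt_of_le_of_lt (EReal.coe_le_coe_iff.mpr (le_trans hx.2.le hsIcc.2)) htT
        exact (hHd x hx.1.le hxT).differentiableWithinAt
      · intro x hx
        rw [interior_Icc] at hx
        have hxT : (x : EReal) < T :=
          lt_of_le_of_lt (EReal.coe_le_coe_iff.mpr (le_trans hx.2.le hsIcc.2)) htT
        have hxneg : H x < 0 := hneg x hx.1.le hx.2
        have := hH' x hx.1.le hxT hxneg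
        have hsq : (0:ℝ) ≤ (H x) ^ 2 := sq_nonneg _
        have : -(H x) ^ 2 / (N - 1) ≤ 0 :=
          div_nonpos_of_nonpos_of_nonneg (by linarith) hN1.le
        linarith
    have hs0' : H s ≤ H 0 := hanti ⟨le_rfl, hsIcc.1⟩ ⟨hsIcc.1, le_rfl⟩ hsIcc.1
    linarith [hs0, hs0', hH0]
  -- Part 2: comparison bound
  have key_bound : ∀ t : ℝ, 0 ≤ t → (t : EReal) < T → t < b →
      H t ≤ (N - 1) / (t - b) := by
    intro t ht0 htT htb
    set F : ℝ → ℝ := fun s => -(N - 1) / H s + s with hF_def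
    have hderivF : ∀ u ∈ Set.Icc (0:ℝ) t,
        HasDerivAt F ((0 * H u - -(N - 1) * deriv H u) / H u ^ 2 + 1) u := by
      intro u hu
      have huT : (u : EReal) < T := lt_of_le_of_lt (EReal.coe_le_coe_iff.mpr hu.2) htT
      have hd := (hHd u hu.1 huT).hasDerivAt
      have hne : H u ≠ 0 := (key_neg u hu.1 huT).ne
      exact ((hasDerivAt_const u (-(N - 1))).div hd hne).add (hasDerivAt_id u)
    have hantiF : AntitoneOn F (Set.Icc 0 t) := by
      apply antitoneOn_of_deriv_nonpos (convex_Icc 0 t)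
      · intro u hu
        exact (hderivF u hu).continuousAt.continuousWithinAt
      · intro u hu
        rw [interior_Icc] at hu
        exact (hderivF u (Set.Ioo_subset_Icc_self hu)).differentiableAt.differentiableWithinAt
      · intro u hu
        rw [interior_Icc] at hu
        have hu' : u ∈ Set.Icc (0:ℝ) t := Set.Ioo_subset_Icc_self hu
        rw [(hderivF u hu').deriv]
        have huT : (u : EReal) < T := lt_of_le_of_lt (EReal.coe_le_coe_iff.mpr hu'.2) htT
        have hHu : H u < 0 := key_neg u hu'.1 huT
        have h2 := hH' u hu'.1 huT hHu
        have hsq : (0:ℝ) < (H u) ^ 2 := pow_two_pos_of_ne_zero hHu.ne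
        rw [show (0 : ℝ) * H u - -(N - 1) * deriv H u = (N - 1) * deriv H u by ring]
        have h3 : deriv H u * (N - 1) ≤ -(H u) ^ 2 := by
          rwa [le_div_iff₀ hN1] at h2
        have key : (N - 1) * deriv H u / (H u) ^ 2 ≤ -1 := by
          rw [div_le_iff₀ hsq]
          linarith
        linarith
    have hFt : F t ≤ F 0 := hantiF ⟨le_rfl, ht0⟩ ⟨ht0, le_rfl⟩ ht0
    have hF0 : -(N - 1) / H 0 ≤ b := by
      have h4 : (N - 1) / (-(H 0)) ≤ (N - 1) / ((n - 1) * δ) :=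
        div_le_div_of_nonneg_left hN1.le hc (by linarith)
      rw [div_neg] at h4
      rw [neg_div, hb_def]
      exact h4
    have hHt : H t < 0 := key_neg t ht0 htT
    have hbt : 0 < b - t := sub_pos.mpr htb
    have h5 : -(N - 1) / H t ≤ b - t := by
      have : -(N - 1) / H t + t ≤ -(N - 1) / H 0 + 0 := hFt
      linarith
    have h6 : N - 1 ≤ (b - t) * (-H t) := by
      have h5' : (N - 1) / (-H t) ≤ b - t := by
        rw [div_neg, ← neg_div]
        exact h5
      exact (div_le_iff₀ (neg_pos.mpr hHt)).mp h5'
    have h8 : (N - 1) / (b - t) ≤ -H t := by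
      rw [div_le_iff₀ hbt]
      nlinarith
    rw [show t - b = -(b - t) by ring, div_neg]
    linarith
  refine ⟨key_neg, key_bound, ?_⟩
  -- Part 3: contradiction gives blow-up claim
  intro hbT
  exfalso
  have hcb : ContinuousAt H b := (hHd b hb.le hbT).continuousAt
  have hHb : H b < 0 := key_neg b hb.le hbT
  obtain ⟨ε, hε, hball⟩ := Metric.continuousAt_iff.mp hcb 1 one_pos
  have hQ : (0:ℝ) < 1 - H b := by linarith
  set m : ℝ := min ε (min b ((N - 1) / (1 - H b))) with hm_def
  have hm : 0 < m := lt_min hε (lt_min hb (div_pos hN1 hQ))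
  set t : ℝ := b - m / 2 with ht_def
  have hmb : m ≤ b := le_trans (min_le_right _ _) (min_le_left _ _)
  have hmQ : m ≤ (N - 1) / (1 - H b) := le_trans (min_le_right _ _) (min_le_right _ _)
  have ht0 : 0 ≤ t := by simp only [ht_def]; linarith
  have htb : t < b := by simp only [ht_def]; linarith
  have htT : (t : EReal) < T := lt_trans (EReal.coe_lt_coe_iff.mpr htb) hbT
  have hbound := key_bound t ht0 htT htb
  have hdist : dist t b < ε := by
    rw [Real.dist_eq]
    have : |t - b| = m / 2 := by
      rw [show t - b = -(m/2) by simp [ht_def], abs_neg, abs_of_pos (by linarith)]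
    rw [this]
    have : m ≤ ε := min_le_left _ _
    linarith
  have hclose : |H t - H b| < 1 := by
    have := hball hdist
    rwa [Real.dist_eq] at this
  have hHtlb : H b - 1 < H t := by
    have := abs_lt.mp hclose
    linarith [this.2]
  have h9 : b - t < (N - 1) / (1 - H b) := by
    have hpos : 0 < (N - 1) / (1 - H b) := div_pos hN1 hQ
    have : b - t = m / 2 := by simp [ht_def]
    linarith
  have h10 : 1 - H b < (N - 1) / (b - t) := by
    rw [lt_div_iff₀ (by linarith : (0:ℝ) < b - t)]
    calc (1 - H b) * (b - t) < (1 - H b) * ((N - 1) / (1 - H b)) :=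
          mul_lt_mul_of_pos_left h9 hQ
      _ = N - 1 := by field_simp
  have h11 : H t ≤ -((N - 1) / (b - t)) := by
    rwa [show t - b = -(b - t) by ring, div_neg] at hbound
  linarith
end

section
/- Let δ > 0 and let y : [0,S) → ℝ be differentiable with y(0) ≤ -(1+δ) and y' ≤ 1 - y² on [0,S). Set s_p := arctanh(1/(1+δ)). Then y(s) ≤ -coth(s_p - s) for all s ∈ [0, min(S, s_p)); in particular y(s) < -1 throughout and y(s) → -∞ as s approaches some s* ≤ s_p if S > s_p. -/
/-!
Where `|y| > 1`, the Riccati inequality `y' ≤ 1 - y²` separates: `s ↦ artanh (-1 / y s) + s` has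
derivative `y' / (y² - 1) + 1 ≤ 0`. For the extremal solution `-coth (s_p - s)` this quantity is
the constant `s_p`. Since `y' < 0` wherever `y² > 1`, a solution starting below `-1` stays below
`y 0`, so the invariant is nonincreasing all along and gives `artanh (-1 / y s) ≤ s_p - s`,
which is `y s ≤ -coth (s_p - s)`; the blow-up follows from `coth t → ∞` as `t → 0⁺`.
-/

open Real Filter

noncomputable def arctanh (x : ℝ) : ℝ := (1 / 2) * Real.log ((1 + x) / (1 - x))

noncomputable def coth (x : ℝ) : ℝ := Real.cosh x / Real.sinh x

open Set Topology

lemma arctanh_eq_artanh {x : ℝ} (hx : x ∈ Icc (-1) 1) : arctanh x = artanh x :=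
  (artanh_eq_half_log hx).symm

lemma coth_eq_inv_tanh (x : ℝ) : coth x = (tanh x)⁻¹ := by
  rw [coth, tanh_eq_sinh_div_cosh, inv_div]

lemma tanh_pos {x : ℝ} (hx : 0 < x) : 0 < tanh x := by
  rw [tanh_eq_sinh_div_cosh]
  exact div_pos (sinh_pos_iff.2 hx) (cosh_pos x)

lemma one_lt_coth {x : ℝ} (hx : 0 < x) : 1 < coth x := by
  rw [coth_eq_inv_tanh, one_lt_inv₀ (tanh_pos hx)]
  exact tanh_lt_one x

lemma coth_artanh {x : ℝ} (hx : x ∈ Ioo (-1) 1) : coth (artanh x) = x⁻¹ := by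
  rw [coth_eq_inv_tanh, tanh_artanh hx]

lemma le_neg_coth_iff_artanh_le {v t : ℝ} (hv : v < -1) (ht : 0 < t) :
    v ≤ -coth t ↔ artanh (-v⁻¹) ≤ t := by
  have hu : -v⁻¹ ∈ Ioo (-1) 1 := by
    rw [← inv_neg]
    exact ⟨by linarith [inv_pos.2 (neg_pos.2 (hv.trans neg_one_lt_zero))],
      inv_lt_one_of_one_lt₀ (by linarith)⟩
  calc v ≤ -coth t ↔ (-v)⁻¹ ≤ tanh t := by
        rw [le_neg, coth_eq_inv_tanh, inv_le_comm₀ (tanh_pos ht) (by linarith)]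
    _ ↔ artanh (-v⁻¹) ≤ t := by
        rw [inv_neg, ← artanh_le_artanh_iff hu ⟨neg_one_lt_tanh t, tanh_lt_one t⟩, artanh_tanh]

lemma hasDerivAt_artanh {x : ℝ} (hx : x ∈ Ioo (-1) 1) :
    HasDerivAt artanh (1 - x ^ 2)⁻¹ x := by
  have h1 : 0 < 1 + x := by linarith [hx.1]
  have h2 : 0 < 1 - x := by linarith [hx.2]
  have h3 : 1 - x ^ 2 ≠ 0 := by nlinarith
  have hq : HasDerivAt (fun y => (1 + y) / (1 - y)) (2 / (1 - x) ^ 2) x :=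
    (((hasDerivAt_id' x).const_add 1).fun_div ((hasDerivAt_id' x).const_sub 1) h2.ne').congr_deriv
      (by ring)
  have hlog : HasDerivAt (fun y => 1 / 2 * log ((1 + y) / (1 - y))) (1 - x ^ 2)⁻¹ x :=
    ((hq.log (div_pos h1 h2).ne').const_mul (1 / 2)).congr_deriv (by field_simp; ring)
  refine hlog.congr_of_eventuallyEq ?_
  filter_upwards [Ioo_mem_nhds hx.1 hx.2] with y hy
  exact artanh_eq_half_log (Ioo_subset_Icc_self hy)

lemma tendsto_coth_nhdsGT_zero : Tendsto coth (𝓝[>] 0) atTop := by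
  have hsinh : Tendsto sinh (𝓝[>] 0) (𝓝[>] 0) := by
    have := continuous_sinh.continuousWithinAt.tendsto_nhdsWithin
      (show MapsTo sinh (Ioi 0) (Ioi 0) from fun x hx => sinh_pos_iff.2 hx) (x := 0)
    rwa [sinh_zero] at this
  have hcosh : Tendsto cosh (𝓝[>] 0) (𝓝 1) := by
    simpa using continuous_cosh.continuousWithinAt.tendsto (s := Ioi 0) (x := 0)
  have hcoth : coth = fun x => cosh x * (sinh x)⁻¹ := funext fun x => div_eq_mul_inv _ _
  rw [hcoth]
  exact hcosh.pos_mul_atTop one_pos (tendsto_inv_nhdsGT_zero.comp hsinh)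

lemma tendsto_neg_coth_sub_nhdsLT (t : ℝ) :
    Tendsto (fun s => -coth (t - s)) (𝓝[<] t) atBot := by
  have h : Tendsto (t - ·) (𝓝[<] t) (𝓝[>] 0) := by
    have := (continuous_sub_left t).continuousWithinAt.tendsto_nhdsWithin
      (show MapsTo (t - ·) (Iio t) (Ioi 0) from
        fun s (hs : s < t) => show 0 < t - s from sub_pos.2 hs) (x := t)
    rwa [sub_self] at this
  exact tendsto_neg_atTop_atBot.comp (tendsto_coth_nhdsGT_zero.comp h)

lemma le_initial_of_riccati {y y' : ℝ → ℝ} {a b : ℝ}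
    (hy : ∀ s ∈ Icc a b, HasDerivAt y (y' s) s) (hy' : ∀ s ∈ Ico a b, y' s ≤ 1 - y s ^ 2)
    (ha : 1 < y a ^ 2) : ∀ s ∈ Icc a b, y s ≤ y a :=
  image_le_of_deriv_right_lt_deriv_boundary
    (fun s hs => (hy s hs).continuousAt.continuousWithinAt)
    (fun s hs => (hy s (Ico_subset_Icc_self hs)).hasDerivWithinAt) le_rfl
    (fun _ => hasDerivAt_const _ _) fun s hs hys => by linarith [hy' s hs, hys ▸ ha]

lemma antitoneOn_artanh_neg_inv_add_of_riccati {y y' : ℝ → ℝ} {a b : ℝ}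
    (hy : ∀ s ∈ Icc a b, HasDerivAt y (y' s) s) (hy' : ∀ s ∈ Ioo a b, y' s ≤ 1 - y s ^ 2)
    (hy1 : ∀ s ∈ Icc a b, 1 < y s ^ 2) :
    AntitoneOn (fun s => artanh (-(y s)⁻¹) + s) (Icc a b) := by
  have hderiv : ∀ s ∈ Icc a b,
      HasDerivAt (fun s => artanh (-(y s)⁻¹) + s) (y' s / (y s ^ 2 - 1) + 1) s := by
    intro s hs
    have h1 := hy1 s hs
    have hys : y s ≠ 0 := by rintro h; norm_num [h] at h1
    have hu : -(y s)⁻¹ ∈ Ioo (-1) 1 := by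
      rw [mem_Ioo, ← abs_lt, ← sq_lt_one_iff_abs_lt_one, neg_sq, inv_pow]
      exact inv_lt_one_of_one_lt₀ h1
    have h2 : y s ^ 2 - 1 ≠ 0 := by linarith
    refine (((hasDerivAt_artanh hu).comp s ((hy s hs).fun_inv hys).fun_neg).add
      (hasDerivAt_id' s)).congr_deriv ?_
    field_simp
  refine antitoneOn_of_hasDerivWithinAt_nonpos (convex_Icc a b)
    (f' := fun s => y' s / (y s ^ 2 - 1) + 1)
    (fun s hs => (hderiv s hs).continuousAt.continuousWithinAt) (fun s hs => ?_) (fun s hs => ?_)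
  all_goals rw [interior_Icc] at hs
  · exact (hderiv s (Ioo_subset_Icc_self hs)).hasDerivWithinAt
  · have h1 := hy1 s (Ioo_subset_Icc_self hs)
    have : y' s / (y s ^ 2 - 1) ≤ -1 := by
      rw [div_le_iff₀ (by linarith)]
      linarith [hy' s hs]
    linarith

theorem le_neg_coth_sub_of_riccati {y y' : ℝ → ℝ} {b t : ℝ} (hb : 0 ≤ b) (hbt : b < t)
    (hy : ∀ s ∈ Icc 0 b, HasDerivAt y (y' s) s) (hy' : ∀ s ∈ Ico 0 b, y' s ≤ 1 - y s ^ 2)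
    (h0 : y 0 ≤ -coth t) : y b ≤ -coth (t - b) := by
  have ht : 0 < t := hb.trans_lt hbt
  have hy0 : y 0 < -1 := h0.trans_lt (neg_lt_neg (one_lt_coth ht))
  have hlt : ∀ s ∈ Icc 0 b, y s < -1 := fun s hs =>
    (le_initial_of_riccati hy hy' (by nlinarith) s hs).trans_lt hy0
  have hmono : artanh (-(y b)⁻¹) + b ≤ artanh (-(y 0)⁻¹) + 0 :=
    antitoneOn_artanh_neg_inv_add_of_riccati hy (fun s hs => hy' s (Ioo_subset_Ico_self hs))
      (fun s hs => by nlinarith [hlt s hs]) (left_mem_Icc.2 hb) (right_mem_Icc.2 hb) hb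
  have hinit := (le_neg_coth_iff_artanh_le hy0 ht).1 h0
  rw [le_neg_coth_iff_artanh_le (hlt b (right_mem_Icc.2 hb)) (sub_pos.2 hbt)]
  linarith

theorem stmt7_general (δ : ℝ) (hδ : 0 < δ) (S : EReal) (y y' : ℝ → ℝ)
    (hy : ∀ s : ℝ, 0 ≤ s → (s : EReal) < S → HasDerivAt y (y' s) s)
    (hy' : ∀ s : ℝ, 0 ≤ s → (s : EReal) < S → y' s ≤ 1 - (y s) ^ 2)
    (h0 : y 0 ≤ -(1 + δ)) :
    (∀ s : ℝ, 0 ≤ s → (s : EReal) < S → s < arctanh (1 / (1 + δ)) →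
      y s ≤ -coth (arctanh (1 / (1 + δ)) - s) ∧ y s < -1) ∧
    (((arctanh (1 / (1 + δ)) : ℝ) : EReal) < S →
      ∃ sstar : ℝ, 0 < sstar ∧ sstar ≤ arctanh (1 / (1 + δ)) ∧
        Tendsto y (nhdsWithin sstar (Set.Iio sstar)) atBot) := by
  have hu : 1 / (1 + δ) ∈ Ioo 0 1 := ⟨by positivity, (div_lt_one (by linarith)).2 (by linarith)⟩
  set sp := arctanh (1 / (1 + δ)) with hsp
  rw [arctanh_eq_artanh ⟨by linarith [hu.1], hu.2.le⟩] at hsp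
  have hsp_pos : 0 < sp := hsp ▸ artanh_pos hu
  have hcoth : coth sp = 1 + δ := by
    rw [hsp, coth_artanh ⟨by linarith [hu.1], hu.2⟩, one_div, inv_inv]
  have hcmp : ∀ s : ℝ, 0 ≤ s → (s : EReal) < S → s < sp → y s ≤ -coth (sp - s) := by
    intro s hs hsS hssp
    have hS : ∀ x ∈ Icc 0 s, (x : EReal) < S := fun x hx =>
      (EReal.coe_le_coe_iff.2 hx.2).trans_lt hsS
    exact le_neg_coth_sub_of_riccati hs hssp (fun x hx => hy x hx.1 (hS x hx))
      (fun x hx => hy' x hx.1 (hS x (Ico_subset_Icc_self hx))) (hcoth ▸ h0)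
  refine ⟨fun s hs hsS hssp => ⟨hcmp s hs hsS hssp, (hcmp s hs hsS hssp).trans_lt
    (neg_lt_neg (one_lt_coth (sub_pos.2 hssp)))⟩, fun hspS => ⟨sp, hsp_pos, le_rfl, ?_⟩⟩
  refine tendsto_atBot_mono' _ ?_ (tendsto_neg_coth_sub_nhdsLT sp)
  filter_upwards [Ioo_mem_nhdsLT hsp_pos] with s hs
  exact hcmp s hs.1.le ((EReal.coe_lt_coe_iff.2 hs.2).trans hspS) hs.2

/-- Riccati comparison with `-coth`: if `y(0) ≤ -(1+δ)` and
`y' ≤ 1 - y²` on `[0,S)`, with `s_p = arctanh(1/(1+δ))`, then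
`y(s) ≤ -coth(s_p - s)` on `[0, min(S, s_p))`, in particular `y < -1` there,
and `y → -∞` at or before `s_p` if `S > s_p`. -/
theorem stmt7 (δ : ℝ) (hδ : 0 < δ) (S : EReal) (hS : 0 < S) (y y' : ℝ → ℝ)
    (hy : ∀ s : ℝ, 0 ≤ s → (s : EReal) < S → HasDerivAt y (y' s) s)
    (hy' : ∀ s : ℝ, 0 ≤ s → (s : EReal) < S → y' s ≤ 1 - (y s) ^ 2)
    (h0 : y 0 ≤ -(1 + δ)) :
    (∀ s : ℝ, 0 ≤ s → (s : EReal) < S → s < arctanh (1 / (1 + δ)) →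
      y s ≤ -coth (arctanh (1 / (1 + δ)) - s) ∧ y s < -1) ∧
    (((arctanh (1 / (1 + δ)) : ℝ) : EReal) < S →
      ∃ sstar : ℝ, 0 < sstar ∧ sstar ≤ arctanh (1 / (1 + δ)) ∧
        Tendsto y (nhdsWithin sstar (Set.Iio sstar)) atBot) :=
  stmt7_general δ hδ S y y' hy hy' h0
end
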